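/- arXiv:1208.2104 — 6 statements merged into one kernel-verified Lean document; each statement's English description precedes it below -/
import Mathlib

section
/- Let L be a Lie algebra over a field F of characteristic 0, and let H be a subalgebra of L such that L decomposes as the direct sum of simultaneous eigenspaces L_ξ = {x ∈ L | [h,x] = ξ(h)x for all h ∈ H} over linear functionals ξ : H → F. Then H is abelian. -/
/-!
Write `z_ξ` for the `L_ξ`-component of `z ∈ L`. For `z ∈ H` the `ξ`-component of `0 = [z, z]` is
`ξ(z) z_ξ`, so `ξ(z) z_ξ = 0` on `H`. This identity, quadratic in `z`, polarises to
`ξ(x) y_ξ = 0` for all `x, y ∈ H`, and `ξ(x) y_ξ` is the `ξ`-component of `[x, y]`.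
-/

open DirectSum

theorem DirectSum.decompose_apply_of_forall_mem_eq_smul {ι R M : Type*} [DecidableEq ι]
    [Semiring R] [AddCommMonoid M] [Module R M] (ℳ : ι → Submodule R M) [Decomposition ℳ]
    (T : M →ₗ[R] M) (c : ι → R) (hT : ∀ i, ∀ m ∈ ℳ i, T m = c i • m) (m : M) (i : ι) :
    (decompose ℳ (T m) i : M) = c i • (decompose ℳ m i : M) := by
  induction m using Decomposition.inductionOn ℳ with
  | zero => simp
  | @homogeneous j m =>
    rw [hT j m m.2]
    obtain rfl | hji := eq_or_ne j i
    · rw [decompose_of_mem_same ℳ m.2, decompose_of_mem_same ℳ (Submodule.smul_mem _ _ m.2)]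
    · rw [decompose_of_mem_ne ℳ m.2 hji, decompose_of_mem_ne ℳ (Submodule.smul_mem _ _ m.2) hji,
        smul_zero]
  | add m m' hm hm' =>
    simp only [map_add, decompose_add, add_apply, Submodule.coe_add, hm, hm', smul_add]

theorem smul_eq_zero_of_forall_smul_self_eq_zero {R V W : Type*} [CommRing R] [IsDomain R]
    [AddCommGroup V] [AddCommGroup W] [Module R W] [Module.IsTorsionFree R W]
    (f : V →+ R) (g : V →+ W) (hfg : ∀ v, f v • g v = 0) (v w : V) : f v • g w = 0 := by
  have hpolar : f w • g v + f v • g w = 0 := by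
    simpa [add_smul, smul_add, hfg] using hfg (v + w)
  have hsq : f v • f v • g w = 0 := by
    calc f v • f v • g w = f v • (f w • g v + f v • g w) - f w • (f v • g v) := by module
      _ = 0 := by rw [hpolar, hfg, smul_zero, smul_zero, sub_zero]
  simpa using hsq

section

variable {F L : Type*} [Field F] [LieRing L] [LieAlgebra F L] {H : LieSubalgebra F L}
  (eig : Module.Dual F H → Submodule F L) [DecidableEq (Module.Dual F H)] [Decomposition eig]

theorem decompose_lie_eq_smul (heig : ∀ ξ, ∀ x ∈ eig ξ, ∀ h : H, ⁅(h : L), x⁆ = ξ h • x)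
    (h : H) (x : L) (ξ : Module.Dual F H) :
    (decompose eig ⁅(h : L), x⁆ ξ : L) = ξ h • (decompose eig x ξ : L) :=
  decompose_apply_of_forall_mem_eq_smul eig (LieModule.toEnd F L L h) (fun ξ => ξ h)
    (fun ξ m hm => heig ξ m hm h) x ξ

theorem smul_decompose_eq_zero (heig : ∀ ξ, ∀ x ∈ eig ξ, ∀ h : H, ⁅(h : L), x⁆ = ξ h • x)
    (x y : H) (ξ : Module.Dual F H) : ξ x • (decompose eig (y : L) ξ : L) = 0 := by
  let component : H →+ L :=
    AddMonoidHom.mk' (fun z => (decompose eig (z : L) ξ : L)) (fun z z' => by simp [decompose_add])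
  refine smul_eq_zero_of_forall_smul_self_eq_zero ξ.toAddMonoidHom component (fun z => ?_) x y
  change ξ z • (decompose eig (z : L) ξ : L) = 0
  rw [← decompose_lie_eq_smul eig heig, lie_self, decompose_zero, DirectSum.zero_apply,
    ZeroMemClass.coe_zero]

end

theorem stmt_0_general (F L : Type*) [Field F] [LieRing L] [LieAlgebra F L]
    (H : LieSubalgebra F L)
    (eig : Module.Dual F H → Submodule F L)
    (heig : ∀ (ξ : Module.Dual F H) (x : L),
      x ∈ eig ξ ↔ ∀ h : H, ⁅(h : L), x⁆ = ξ h • x)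
    (hindep : iSupIndep eig) (hspan : ⨆ ξ, eig ξ = ⊤) :
    ∀ x y : H, ⁅x, y⁆ = 0 := by
  classical
  let : Decomposition eig :=
    ((isInternal_submodule_iff_iSupIndep_and_iSup_eq_top eig).mpr
      ⟨hindep, hspan⟩).chooseDecomposition
  have heig_mem : ∀ ξ, ∀ x ∈ eig ξ, ∀ h : H, ⁅(h : L), x⁆ = ξ h • x := fun ξ x => (heig ξ x).mp
  intro x y
  ext1
  refine (decompose eig).injective (DFinsupp.ext fun ξ => Subtype.ext ?_)
  rw [LieSubalgebra.coe_bracket, decompose_lie_eq_smul eig heig_mem,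
    smul_decompose_eq_zero eig heig_mem]
  simp

/-- An ad-diagonalizable subalgebra of a Lie algebra is automatically abelian. -/
theorem stmt_0 (F L : Type*) [Field F] [CharZero F] [LieRing L] [LieAlgebra F L]
    (H : LieSubalgebra F L)
    (eig : Module.Dual F H → Submodule F L)
    (heig : ∀ (ξ : Module.Dual F H) (x : L),
      x ∈ eig ξ ↔ ∀ h : H, ⁅(h : L), x⁆ = ξ h • x)
    (hindep : iSupIndep eig) (hspan : ⨆ ξ, eig ξ = ⊤) :
    ∀ x y : H, ⁅x, y⁆ = 0 :=
  stmt_0_general F L H eig heig hindep hspan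
end

section
/- Let L be a Lie algebra over a field F with a symmetric invariant bilinear form B, and let g be a perfect ideal of L (i.e., [g,g] = g). Suppose every symmetric invariant bilinear form on g is a scalar multiple of the restriction B' of B to g × g. Then every invariant bilinear form E on L × g (i.e., satisfying E([x,u],v) = E(x,[u,v]) appropriately) is a scalar multiple of the restriction of B to L × g. -/
/-- If every symmetric invariant bilinear form on a perfect ideal `g` of a Lie algebra `L`
is a scalar multiple of the restriction of `B`, then every invariant bilinear form on
`L × g` is a scalar multiple of the restriction of `B` to `L × g`. -/
theorem stmt_4 (F L : Type*) [Field F] [LieRing L] [LieAlgebra F L]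
    (B : L →ₗ[F] L →ₗ[F] F)
    (hBsymm : ∀ x y : L, B x y = B y x)
    (hBinv : ∀ x y z : L, B ⁅x, y⁆ z = B x ⁅y, z⁆)
    (g : LieIdeal F L) (hperf : ⁅g, g⁆ = g)
    (hunique : ∀ E' : g →ₗ[F] g →ₗ[F] F,
      (∀ u v : g, E' u v = E' v u) →
      (∀ u v w : g, E' ⁅u, v⁆ w = E' u ⁅v, w⁆) →
      ∃ c : F, ∀ u v : g, E' u v = c * B (u : L) (v : L))
    (E : L →ₗ[F] g →ₗ[F] F)
    (hEinv : ∀ (x : L) (u v : g), E ⁅x, (u : L)⁆ v = E x ⁅u, v⁆) :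
    ∃ c : F, ∀ (x : L) (u : g), E x u = c * B x (u : L) := by
  classical
  set σ : g →ₗ[F] L := (LieSubmodule.toSubmodule g).subtype with hσ
  -- Any linear functional on `g` vanishing on brackets vanishes, since `g` is perfect.
  have hspan : ∀ f : g →ₗ[F] F, (∀ v w : g, f ⁅v, w⁆ = 0) → ∀ u : g, f u = 0 := by
    intro f hf u
    have hmem : (u : L) ∈ Submodule.span F { m : L | ∃ x ∈ g, ∃ n ∈ g, ⁅x, n⁆ = m } := by
      rw [← LieSubmodule.lieIdeal_oper_eq_linear_span', hperf]
      exact u.2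
    have hle : Submodule.span F { m : L | ∃ x ∈ g, ∃ n ∈ g, ⁅x, n⁆ = m } ≤
        (LinearMap.ker f).map σ := by
      rw [Submodule.span_le]
      rintro m ⟨x, hx, n, hn, rfl⟩
      exact ⟨⁅(⟨x, hx⟩ : g), (⟨n, hn⟩ : g)⁆, hf _ _, rfl⟩
    obtain ⟨z, hz, hzu⟩ := hle hmem
    have hz' : z = u := Subtype.ext hzu
    rwa [hz'] at hz
  -- coe of brackets
  have hcoe : ∀ u v : g, ((⁅u, v⁆ : g) : L) = ⁅(u : L), (v : L)⁆ := fun u v => rfl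
  -- key invariance identity
  have key : ∀ u v w : g, E ((⁅u, v⁆ : g) : L) w = E (u : L) ⁅v, w⁆ := by
    intro u v w
    rw [hcoe]
    exact hEinv (u : L) v w
  -- skew identity in the first two slots
  have star : ∀ a b c : g, E (a : L) ⁅b, c⁆ = - E (b : L) ⁅a, c⁆ := by
    intro a b c
    rw [← key a b c, ← key b a c]
    have h1 : (⁅a, b⁆ : g) = -⁅b, a⁆ := (lie_skew a b).symm
    rw [h1]
    have h2 : ((-⁅b, a⁆ : g) : L) = -((⁅b, a⁆ : g) : L) := rfl
    rw [h2, map_neg, LinearMap.neg_apply]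
  -- symmetry of E on brackets
  have symb : ∀ w u v : g, E ((⁅w, u⁆ : g) : L) v = E (v : L) ⁅w, u⁆ := by
    intro w u v
    rw [key w u v, star v w u]
    have h1 : (⁅v, u⁆ : g) = -⁅u, v⁆ := (lie_skew v u).symm
    rw [h1, map_neg, neg_neg]
  -- the restriction of E to g × g
  set E₀ : g →ₗ[F] g →ₗ[F] F := E.comp σ with hE₀
  have hE₀app : ∀ u v : g, E₀ u v = E (u : L) v := fun u v => rfl
  -- E₀ is symmetric
  have hsym : ∀ u v : g, E₀ u v = E₀ v u := by
    intro u v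
    have h := hspan (E₀.flip v - E₀ v) (fun a b => by
      simp only [LinearMap.sub_apply, LinearMap.flip_apply]
      rw [hE₀app, hE₀app, symb a b v]
      ring) u
    simpa only [LinearMap.sub_apply, LinearMap.flip_apply, sub_eq_zero] using h
  -- E₀ is invariant
  have hinv : ∀ u v w : g, E₀ ⁅u, v⁆ w = E₀ u ⁅v, w⁆ := by
    intro u v w
    rw [hE₀app, hE₀app]
    exact key u v w
  obtain ⟨c, hc⟩ := hunique E₀ hsym hinv
  refine ⟨c, fun x u => ?_⟩
  have h := hspan (E x - c • ((B x).comp σ)) (fun v w => by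
    simp only [LinearMap.sub_apply, LinearMap.smul_apply, LinearMap.comp_apply, smul_eq_mul]
    have hm : ⁅x, (v : L)⁆ ∈ g := g.lie_mem v.2
    have h1 : E x ⁅v, w⁆ = E ((⟨⁅x, (v : L)⁆, hm⟩ : g) : L) w := (hEinv x v w).symm
    have h2 : E₀ (⟨⁅x, (v : L)⁆, hm⟩ : g) w = c * B ⁅x, (v : L)⁆ (w : L) := hc _ _
    rw [h1, ← hE₀app, h2, hBinv]
    have h3 : σ ⁅v, w⁆ = ⁅(v : L), (w : L)⁆ := rfl
    rw [h3]
    ring) u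
  have h4 : σ u = (u : L) := rfl
  simp only [LinearMap.sub_apply, LinearMap.smul_apply, LinearMap.comp_apply, smul_eq_mul,
    h4, sub_eq_zero] at h
  exact h
end

section
/- Let F be a field of characteristic 0 and n ≥ 2. Consider gl_n(F) = sl_n(F) ⊕ F·e_{jj} for a fixed j, and let B be a symmetric invariant bilinear form on gl_n(F) whose restriction to sl_n(F) × gl_n(F) equals c·tr(xy) for some c ∈ F×. Then B is nondegenerate if and only if B(e_{jj}, e_{jj}) ≠ c(n-1)/n. -/
/-!
Splitting `x = (x - (tr x / n) • 1) + (tr x / n) • 1` into a traceless part and a scalar part,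
symmetry and the hypothesis on `sl_n` pin `B` down completely:
`B x y = c tr(xy) + tr x tr y (B(1,1)/n² - c/n)`. In particular `B(1, y) = (tr y / n) B(1,1)`
and `B(e_jj, e_jj) - c(n-1)/n = B(1,1)/n²`. The radical of `B` consists of matrices orthogonal to
`sl_n` under the trace form, i.e. of scalars, so `B` is nondegenerate exactly when `B(1,1) ≠ 0`.
-/

open Matrix

theorem Matrix.mem_range_scalar_of_forall_trace_mul_eq_zero {ι R : Type*} [Fintype ι]
    [DecidableEq ι] [CommRing R] {x : Matrix ι ι R}
    (h : ∀ y : Matrix ι ι R, trace y = 0 → trace (y * x) = 0) :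
    x ∈ Set.range (scalar ι) := by
  refine mem_range_scalar_of_commute_single fun i j _ => ?_
  change single i j 1 * x = x * single i j 1
  rw [ext_iff_trace_mul_left]
  intro z
  -- `x` is orthogonal to the commutator `[E_ij, z]`, which is traceless.
  have := h (single i j 1 * z - z * single i j 1) (by rw [trace_sub, trace_mul_comm, sub_self])
  rw [sub_mul, trace_sub, sub_eq_zero] at this
  rw [← Matrix.mul_assoc, ← this, Matrix.mul_assoc, trace_mul_comm, Matrix.mul_assoc]

section TraceForm

variable {ι F : Type*} [Fintype ι] [DecidableEq ι] [Field F]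
  {B : Matrix ι ι F →ₗ[F] Matrix ι ι F →ₗ[F] F} {c : F}

theorem trace_sub_trace_div_smul_one (hN : (Fintype.card ι : F) ≠ 0) (x : Matrix ι ι F) :
    trace (x - (trace x / Fintype.card ι) • 1) = 0 := by
  rw [trace_sub, trace_smul, trace_one, smul_eq_mul, div_mul_cancel₀ _ hN, sub_self]

theorem bilin_one_left_eq (hN : (Fintype.card ι : F) ≠ 0) (hsymm : ∀ x y, B x y = B y x)
    (htr : ∀ x y, trace x = 0 → B x y = c * trace (x * y)) (y : Matrix ι ι F) :
    B 1 y = trace y / Fintype.card ι * B 1 1 := by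
  have h := htr _ 1 (trace_sub_trace_div_smul_one hN y)
  rw [mul_one, trace_sub_trace_div_smul_one hN, mul_zero, hsymm, map_sub, map_smul,
    smul_eq_mul] at h
  exact sub_eq_zero.mp h

theorem bilin_apply_eq (hN : (Fintype.card ι : F) ≠ 0) (hsymm : ∀ x y, B x y = B y x)
    (htr : ∀ x y, trace x = 0 → B x y = c * trace (x * y)) (x y : Matrix ι ι F) :
    B x y = c * trace (x * y) +
      trace x * trace y * (B 1 1 / (Fintype.card ι : F) ^ 2 - c / Fintype.card ι) := by
  have h := htr _ y (trace_sub_trace_div_smul_one hN x)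
  rw [map_sub, map_smul, LinearMap.sub_apply, LinearMap.smul_apply, smul_eq_mul,
    bilin_one_left_eq hN hsymm htr, sub_mul, smul_mul_assoc, Matrix.one_mul,
    trace_sub, trace_smul, smul_eq_mul] at h
  field_simp at h ⊢
  linear_combination h

theorem bilin_nondegenerate_iff_one_one_ne_zero (hN : (Fintype.card ι : F) ≠ 0)
    (hsymm : ∀ x y, B x y = B y x) (hc : c ≠ 0)
    (htr : ∀ x y, trace x = 0 → B x y = c * trace (x * y)) :
    (∀ x, (∀ y, B x y = 0) → x = 0) ↔ B 1 1 ≠ 0 := by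
  have : Nonempty ι := Fintype.card_pos_iff.mp (Nat.pos_of_ne_zero (by rintro h; simp [h] at hN))
  constructor
  · intro hnd h11
    refine one_ne_zero (hnd 1 fun y => ?_)
    rw [bilin_one_left_eq hN hsymm htr, h11, mul_zero]
  · intro h11 x hx
    obtain ⟨a, rfl⟩ : x ∈ Set.range (scalar ι) :=
      mem_range_scalar_of_forall_trace_mul_eq_zero fun y hy =>
        (mul_eq_zero.mp ((htr y x hy).symm.trans ((hsymm y x).trans (hx y)))).resolve_left hc
    have := hx 1
    rw [scalar_apply, ← smul_one_eq_diagonal, map_smul, LinearMap.smul_apply, smul_eq_mul] at this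
    rw [(mul_eq_zero.mp this).resolve_right h11, scalar_apply, diagonal_zero]

end TraceForm

theorem stmt_8_general (F : Type*) [Field F] [CharZero F] (n : ℕ) (j : Fin n)
    (B : Matrix (Fin n) (Fin n) F →ₗ[F] Matrix (Fin n) (Fin n) F →ₗ[F] F)
    (hsymm : ∀ x y, B x y = B y x)
    (c : F) (hc : c ≠ 0)
    (htr : ∀ x y, Matrix.trace x = 0 → B x y = c * Matrix.trace (x * y)) :
    (∀ x, (∀ y, B x y = 0) → x = 0) ↔
      B (Matrix.single j j 1) (Matrix.single j j 1)
        ≠ c * ((n : F) - 1) / (n : F) := by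
  have hn : (n : F) ≠ 0 := Nat.cast_ne_zero.mpr j.pos.ne'
  have hN : (Fintype.card (Fin n) : F) ≠ 0 := by rwa [Fintype.card_fin]
  have hgap : B (single j j 1) (single j j 1) - c * ((n : F) - 1) / n = B 1 1 / (n : F) ^ 2 := by
    rw [bilin_apply_eq hN hsymm htr, single_mul_single_same, mul_one, trace_single_eq_same,
      Fintype.card_fin]
    field_simp
    ring
  rw [bilin_nondegenerate_iff_one_one_ne_zero hN hsymm hc htr,
    ← sub_ne_zero (b := c * ((n : F) - 1) / n), hgap]
  simp [hn]

/-- Nondegeneracy criterion for a symmetric invariant bilinear form on `gl_n(F)` that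
restricts to `c·tr(xy)` on `sl_n(F) × gl_n(F)`: it is nondegenerate iff
`B(e_jj, e_jj) ≠ c(n-1)/n`. -/
theorem stmt_8 (F : Type*) [Field F] [CharZero F] (n : ℕ) (hn : 2 ≤ n) (j : Fin n)
    (B : Matrix (Fin n) (Fin n) F →ₗ[F] Matrix (Fin n) (Fin n) F →ₗ[F] F)
    (hsymm : ∀ x y, B x y = B y x)
    (hinv : ∀ x y z, B ⁅x, y⁆ z = B x ⁅y, z⁆)
    (c : F) (hc : c ≠ 0)
    (htr : ∀ x y, Matrix.trace x = 0 → B x y = c * Matrix.trace (x * y)) :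
    (∀ x, (∀ y, B x y = 0) → x = 0) ↔
      B (Matrix.single j j 1) (Matrix.single j j 1)
        ≠ c * ((n : F) - 1) / (n : F) :=
  stmt_8_general F n j B hsymm c hc htr
end

section
/- Let F be a field of characteristic 0, 𝔍 an infinite index set, T_𝔍 the space of all diagonal 𝔍×𝔍 matrices over F, h the trace-zero finitely-supported diagonal matrices, ι the identity diagonal matrix, and e_{jj} a matrix unit for fixed j ∈ 𝔍. Let T_𝔍^{as} be the subspace of T_𝔍 of almost-scalar diagonal matrices (those whose diagonal entries all equal a common value except at finitely many positions). Then T_𝔍^{as} = h ⊕ F·ι ⊕ F·e_{jj}. -/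
/-- For an infinite index set `J`, the space of almost-scalar diagonal matrices decomposes
as `T^{as} = h ⊕ F·ι ⊕ F·e_{jj}`, where `h` consists of the finitely supported trace-zero
diagonal matrices, `ι` is the identity and `e_{jj}` a diagonal matrix unit. -/
theorem stmt_10 (F : Type*) [Field F] [CharZero F] (J : Type*) [Infinite J]
    [DecidableEq J] (j : J)
    (Tas h : Submodule F (J → F))
    (hTas : ∀ d : J → F, d ∈ Tas ↔ ∃ a : F, {i | d i ≠ a}.Finite)
    (hh : ∀ d : J → F, d ∈ h ↔ (Function.support d).Finite ∧ ∑ᶠ i, d i = 0) :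
    Tas = h ⊔ Submodule.span F {fun _ => (1 : F)} ⊔ Submodule.span F {Pi.single j (1 : F)}
      ∧ Disjoint h
          (Submodule.span F {fun _ => (1 : F)} ⊔ Submodule.span F {Pi.single j (1 : F)})
      ∧ Disjoint (Submodule.span F {fun _ => (1 : F)})
          (Submodule.span F {Pi.single j (1 : F)}) := by
  have hsingle : ∀ b : F, ∑ᶠ i, (b • (Pi.single j (1:F) : J → F)) i = b := by
    intro b
    rw [finsum_eq_single _ j]
    · simp
    · intro x hx; simp [Pi.single_apply, hx]
  refine ⟨?_, ?_, ?_⟩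
  · apply le_antisymm
    · intro d hd
      obtain ⟨a, hf⟩ := (hTas d).1 hd
      set g : J → F := d - a • (fun _ => (1:F)) with hg
      have hgsupp : (Function.support g).Finite := by
        apply hf.subset
        intro i hi
        simp only [hg, Function.mem_support, Pi.sub_apply, Pi.smul_apply, smul_eq_mul,
          mul_one] at hi
        simpa [sub_ne_zero] using hi
      set s := ∑ᶠ i, g i with hs
      have hmem : g - s • (Pi.single j (1:F) : J → F) ∈ h := by
        rw [hh]
        constructor
        · apply (hgsupp.union (Set.finite_singleton j)).subset
          intro i hi
          simp only [Function.mem_support, Pi.sub_apply, Pi.smul_apply, smul_eq_mul] at hi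
          by_cases hij : i = j
          · exact Or.inr hij
          · left; simpa [Pi.single_apply, hij] using hi
        · have hsupp2 : (Function.support (fun i => (s • (Pi.single j (1:F) : J → F)) i)).Finite := by
            apply (Set.finite_singleton j).subset
            intro i hi
            simp only [Function.mem_support, Pi.smul_apply, smul_eq_mul] at hi
            by_contra hij
            rw [Set.mem_singleton_iff] at hij
            simp [Pi.single_apply, hij] at hi
          have := finsum_sub_distrib hgsupp hsupp2
          simp only [Pi.sub_apply] at this ⊢
          rw [this, hsingle s, ← hs, sub_self]
      have hdec : d = (g - s • (Pi.single j (1:F) : J → F)) + a • (fun _ => (1:F)) + s • (Pi.single j (1:F) : J → F) := by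
        ext i
        simp only [hg, Pi.add_apply, Pi.sub_apply, Pi.smul_apply, smul_eq_mul, mul_one]
        ring
      rw [hdec]
      refine Submodule.add_mem _ (Submodule.add_mem _ ?_ ?_) ?_
      · exact Submodule.mem_sup_left (Submodule.mem_sup_left hmem)
      · exact Submodule.mem_sup_left (Submodule.mem_sup_right
          (Submodule.smul_mem _ a (Submodule.mem_span_singleton_self _)))
      · exact Submodule.mem_sup_right
          (Submodule.smul_mem _ s (Submodule.mem_span_singleton_self _))
    · refine sup_le (sup_le ?_ ?_) ?_
      · intro d hd
        obtain ⟨hfin, -⟩ := (hh d).1 hd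
        exact (hTas d).2 ⟨0, by simpa [Function.support] using hfin⟩
      · rw [Submodule.span_le]
        rintro x rfl
        exact (hTas _).2 ⟨1, by simp⟩
      · rw [Submodule.span_le]
        rintro x rfl
        refine (hTas _).2 ⟨0, (Set.finite_singleton j).subset ?_⟩
        intro i hi
        by_contra hij
        simp [Pi.single_apply, hij] at hi
  · rw [Submodule.disjoint_def]
    intro x hx hx2
    obtain ⟨y, hy, z, hz, rfl⟩ := Submodule.mem_sup.1 hx2
    obtain ⟨a, rfl⟩ := Submodule.mem_span_singleton.1 hy
    obtain ⟨b, rfl⟩ := Submodule.mem_span_singleton.1 hz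
    obtain ⟨hfin, hsum⟩ := (hh _).1 hx
    have ha : a = 0 := by
      by_contra ha
      have hsub : {j}ᶜ ⊆ Function.support (a • (fun _ => (1:F)) + b • (Pi.single j (1:F) : J → F)) := by
        intro i hi
        simp only [Set.mem_compl_iff, Set.mem_singleton_iff] at hi
        simp [Function.mem_support, Pi.single_apply, hi, ha]
      exact (Set.finite_singleton j).infinite_compl (hfin.subset hsub)
    subst ha
    have hb : b = 0 := by
      have := hsum
      rw [show (0:F) • (fun _ => (1:F)) + b • (Pi.single j (1:F) : J → F) = b • (Pi.single j (1:F) : J → F) by simp] at this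
      rwa [hsingle b] at this
    simp [hb]
  · rw [Submodule.disjoint_def]
    intro x hx hx2
    obtain ⟨a, rfl⟩ := Submodule.mem_span_singleton.1 hx
    obtain ⟨b, hb⟩ := Submodule.mem_span_singleton.1 hx2
    obtain ⟨i, hij⟩ := exists_ne j
    have := congrFun hb i
    simp [Pi.single_apply, hij] at this
    simp [this]
end

section
/- Let {S_μ}_{μ∈Δ} be a root system extended by an abelian group G, for a locally finite irreducible root system Δ, and suppose μ, ν ∈ Δ have the same length. Then S_μ = S_ν. Moreover, if μ is a short root, then S_ν ⊆ S_μ for all ν ∈ Δ. -/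
/-! Reflections do not change `S`: the extension axiom with `s' = 0` gives `S_ν ⊆ S_{s_μ ν}`
(reflecting in `μ/2` instead of `μ` when `μ/2` is a root, since then `0 ∈ S_{μ/2}`), and `s_μ` is
an involution. Local finiteness forces `⟨ν, α⟩⟨α, ν⟩ < 4` for independent roots, so two
non-orthogonal roots of equal length are `±` each other or have Cartan number `±1`, and in either
case one is carried to the other by reflections and `-1`. Irreducibility makes every root
non-orthogonal to some member of any reflection-stable set of roots, which spreads `S_μ = S_ν`
over each length. Finally, for a short root `α` with `⟨α, ν⟩ = -1` the axiom with `s = 0 ∈ S_α`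
gives `S_ν ⊆ S_{α + ν}`, and `α + ν` is again short. -/

namespace ExtendedRootSystem

section Field

variable {K V : Type*} [Field K] [AddCommGroup V] [Module K V] (B : V →ₗ[K] V →ₗ[K] K)

/-- The Cartan number `⟨ν, μ⟩`. -/
def cartan (ν μ : V) : K := 2 * B ν μ / B μ μ

def reflect (μ ν : V) : V := ν - cartan B ν μ • μ

variable {B}

lemma cartan_add_left (x y μ : V) : cartan B (x + y) μ = cartan B x μ + cartan B y μ := by
  simp only [cartan, map_add, LinearMap.add_apply]; ring

lemma cartan_smul_left (c : K) (x μ : V) : cartan B (c • x) μ = c * cartan B x μ := by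
  simp only [cartan, map_smul, LinearMap.smul_apply, smul_eq_mul]; ring

lemma cartan_smul_right (c : K) (x μ : V) : cartan B x (c • μ) = cartan B x μ / c := by
  rcases eq_or_ne c 0 with rfl | hc
  · simp [cartan]
  · simp only [cartan, map_smul, LinearMap.smul_apply, smul_eq_mul]
    rcases eq_or_ne (B μ μ) 0 with h | h
    · simp [h]
    · field_simp

lemma cartan_neg_right (x μ : V) : cartan B x (-μ) = -cartan B x μ := by
  simp only [cartan, map_neg, LinearMap.neg_apply]; ring

lemma cartan_self {μ : V} (h : B μ μ ≠ 0) : cartan B μ μ = 2 := by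
  simp [cartan, h]

lemma cartan_eq_zero_iff [CharZero K] {ν μ : V} (h : B μ μ ≠ 0) : cartan B ν μ = 0 ↔ B ν μ = 0 := by
  simp [cartan, h]

lemma reflect_self {μ : V} (h : B μ μ ≠ 0) : reflect B μ μ = -μ := by
  rw [reflect, cartan_self h]; module

lemma cartan_reflect {μ ν : V} (h : B μ μ ≠ 0) : cartan B (reflect B μ ν) μ = -cartan B ν μ := by
  rw [reflect, sub_eq_add_neg, cartan_add_left, ← neg_smul, cartan_smul_left, cartan_self h]
  ring

lemma reflect_reflect {μ ν : V} (h : B μ μ ≠ 0) : reflect B μ (reflect B μ ν) = ν := by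
  conv_lhs => rw [reflect, cartan_reflect h]
  simp only [reflect]; module

lemma apply_reflect_left (μ ν x : V) : B (reflect B μ ν) x = B ν x - cartan B ν μ * B μ x := by
  simp [reflect]

lemma apply_reflect_reflect (hB : ∀ u v : V, B u v = B v u) (μ ν : V) :
    B (reflect B μ ν) (reflect B μ ν) = B ν ν := by
  rcases eq_or_ne (B μ μ) 0 with h | h
  · simp [reflect, cartan, h]
  · simp only [reflect, cartan, map_sub, map_smul, LinearMap.sub_apply, LinearMap.smul_apply,
      smul_eq_mul, hB μ ν]
    field_simp
    ring

lemma reflect_smul_add_smul {α : V} (hα : B α α ≠ 0) (a b : K) (ν : V) :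
    reflect B α (a • α + b • ν) = (-a - b * cartan B ν α) • α + b • ν := by
  rw [reflect, cartan_add_left, cartan_smul_left, cartan_smul_left, cartan_self hα]
  module

end Field

lemma strictMono_of_two_step_recurrence {K : Type*} [CommRing K] [LinearOrder K]
    [IsStrictOrderedRing K] {t : K} (ht : 2 ≤ t) {b : ℕ → K}
    (hb : ∀ n, b (n + 2) = t * b (n + 1) - b n) (h0 : 0 ≤ b 0) (h01 : b 0 < b 1) :
    StrictMono b := by
  have key : ∀ n, 0 ≤ b n ∧ b n < b (n + 1) := by
    intro n
    induction n with
    | zero => exact ⟨h0, h01⟩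
    | succ n ih =>
      obtain ⟨hn, hlt⟩ := ih
      refine ⟨by linarith, ?_⟩
      rw [hb n]
      nlinarith
  exact strictMono_nat_of_lt_succ fun n ↦ (key n).2

variable {V : Type*} [AddCommGroup V] [Module ℚ V] {B : V →ₗ[ℚ] V →ₗ[ℚ] ℚ}

variable (B) in
/-- The axioms of a root system, except local finiteness and irreducibility. -/
structure IsRootSystem (Δ : Set V) : Prop where
  symm : ∀ u v : V, B u v = B v u
  pos : ∀ μ ∈ Δ, 0 < B μ μ
  cartan_int : ∀ μ ∈ Δ, ∀ ν ∈ Δ, ∃ k : ℤ, (k : ℚ) = cartan B ν μ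
  reflect_mem : ∀ μ ∈ Δ, ∀ ν ∈ Δ, reflect B μ ν ∈ Δ

def IsLocallyFinite (Δ : Set V) : Prop :=
  ∀ S' : Finset V, (Δ ∩ (Submodule.span ℚ (S' : Set V) : Set V)).Finite

variable (B) in
def IsIrreducible (Δ : Set V) : Prop :=
  ∀ Δ₁ Δ₂ : Set V, Δ = Δ₁ ∪ Δ₂ → (∀ a ∈ Δ₁, ∀ b ∈ Δ₂, B a b = 0) → Δ₁ = ∅ ∨ Δ₂ = ∅

namespace IsRootSystem

variable {Δ : Set V} (hΔ : IsRootSystem B Δ)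
include hΔ

lemma apply_self_ne_zero {μ : V} (hμ : μ ∈ Δ) : B μ μ ≠ 0 := (hΔ.pos μ hμ).ne'

lemma neg_mem {μ : V} (hμ : μ ∈ Δ) : -μ ∈ Δ := by
  simpa [reflect_self (hΔ.apply_self_ne_zero hμ)] using hΔ.reflect_mem μ hμ μ hμ

lemma half_smul_half_smul_not_mem {μ : V} (hμ : μ ∈ Δ) : (1 / 2 : ℚ) • (1 / 2 : ℚ) • μ ∉ Δ := by
  intro h
  obtain ⟨k, hk⟩ := hΔ.cartan_int μ hμ _ h
  rw [smul_smul, cartan_smul_left, cartan_self (hΔ.apply_self_ne_zero hμ)] at hk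
  have : (2 * k : ℚ) = 1 := by linarith
  norm_cast at this
  omega

lemma exists_apply_ne_zero
    (hirr : IsIrreducible B Δ)
    {X : Set V} (hXΔ : X ⊆ Δ) (hX : X.Nonempty) (hXrefl : ∀ μ ∈ Δ, ∀ α ∈ X, reflect B μ α ∈ X)
    {ν : V} (hν : ν ∈ Δ) : ∃ α ∈ X, B α ν ≠ 0 := by
  set Y := {ρ ∈ Δ | ∃ α ∈ X, B α ρ ≠ 0}
  have hXY : X ⊆ Y := fun α hα ↦ ⟨hXΔ hα, α, hα, hΔ.apply_self_ne_zero (hXΔ hα)⟩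
  -- If `α ∈ X` sees `a` but not `b`, then `s_a α ∈ X` sees `b` as soon as `a` does.
  have horth : ∀ a ∈ Y, ∀ b ∈ Δ \ Y, B a b = 0 := by
    rintro a ⟨ha, α, hα, hαa⟩ b ⟨hb, hbY⟩
    by_contra hab
    refine hbY ⟨hb, reflect B a α, hXrefl a ha α hα, ?_⟩
    have hαb : B α b = 0 := by
      by_contra h
      exact hbY ⟨hb, α, hα, h⟩
    have hc : cartan B α a ≠ 0 := (cartan_eq_zero_iff (hΔ.apply_self_ne_zero ha)).not.mpr hαa
    simpa [apply_reflect_left, hαb] using mul_ne_zero hc hab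
  rcases hirr Y (Δ \ Y) (Set.union_sdiff_cancel (Set.sep_subset _ _)).symm horth with h | h
  · obtain ⟨α, hα⟩ := hX
    exact absurd (hXY hα) (h ▸ Set.notMem_empty α)
  · by_contra hνY
    exact (h ▸ Set.notMem_empty ν) ⟨hν, fun h' ↦ hνY h'.2⟩

/-- When `⟨ν, α⟩⟨α, ν⟩ ≥ 4`, the `ν`-coordinates of the iterates `(s_ν s_α)ⁿ ν` grow without
bound, giving infinitely many roots in the plane of `α` and `ν`. -/
lemma cartan_mul_cartan_lt_four
    (hlocfin : IsLocallyFinite Δ)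
    {α ν : V} (hα : α ∈ Δ) (hν : ν ∈ Δ) (hind : LinearIndependent ℚ ![α, ν]) :
    cartan B ν α * cartan B α ν < 4 := by
  set p := cartan B ν α
  set q := cartan B α ν
  by_contra! hpq
  let step : ℚ × ℚ → ℚ × ℚ := fun c ↦ (-c.1 - c.2 * p, c.1 * q + c.2 * (p * q - 1))
  let coeff : ℕ → ℚ × ℚ := fun n ↦ step^[n] (0, 1)
  let w : ℕ → V := fun n ↦ (coeff n).1 • α + (coeff n).2 • ν
  have hw_succ : ∀ n, w (n + 1) = reflect B ν (reflect B α (w n)) := by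
    intro n
    rw [reflect_smul_add_smul (hΔ.apply_self_ne_zero hα), add_comm (_ • α),
      reflect_smul_add_smul (hΔ.apply_self_ne_zero hν)]
    simp only [w, coeff, Function.iterate_succ_apply', step]
    module
  have hw : ∀ n, w n ∈ Δ := by
    intro n
    induction n with
    | zero => simpa [w, coeff] using hν
    | succ n ih => exact hw_succ n ▸ hΔ.reflect_mem ν hν _ (hΔ.reflect_mem α hα _ ih)
  have hmono : StrictMono fun n ↦ (coeff n).2 := by
    refine strictMono_of_two_step_recurrence (t := p * q - 2) (by linarith) (fun n ↦ ?_)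
      (by simp [coeff]) (by simp [coeff, step]; linarith)
    simp only [coeff, Function.iterate_succ_apply', step]
    ring
  classical
  have hinj : w.Injective := fun i j h ↦ hmono.injective (hind.eq_of_pair h).2
  refine Set.infinite_of_injective_forall_mem (s := Δ ∩ Submodule.span ℚ {α, ν}) hinj
    (fun n ↦ ⟨hw n, ?_⟩) (by simpa using hlocfin {α, ν})
  exact Submodule.add_mem _ (Submodule.smul_mem _ _ (Submodule.subset_span (by simp)))
    (Submodule.smul_mem _ _ (Submodule.subset_span (by simp)))

lemma eq_or_eq_neg_or_cartan_eq_one_or_neg_one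
    (hlocfin : IsLocallyFinite Δ)
    {α ν : V} (hα : α ∈ Δ) (hν : ν ∈ Δ) (hle : B α α ≤ B ν ν) (hαν : B α ν ≠ 0) :
    ν = α ∨ ν = -α ∨ cartan B α ν = 1 ∨ cartan B α ν = -1 := by
  have hαα := hΔ.pos α hα
  have hνν := hΔ.pos ν hν
  obtain ⟨q, hq⟩ := hΔ.cartan_int ν hν α hα
  have hq0 : q ≠ 0 := by
    rintro rfl
    exact hαν ((cartan_eq_zero_iff hνν.ne').mp (by simpa using hq.symm))
  suffices ν = α ∨ ν = -α ∨ q = 1 ∨ q = -1 by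
    rcases this with h | h | rfl | rfl <;> simp_all
  by_cases hind : LinearIndependent ℚ ![α, ν]
  · have hpq : cartan B ν α * B α α = cartan B α ν * B ν ν := by
      simp only [cartan, hΔ.symm ν α]
      field_simp
    have hq2 : (q : ℚ) ^ 2 < 4 := by
      refine lt_of_mul_lt_mul_right ?_ hνν.le
      calc (q : ℚ) ^ 2 * B ν ν = cartan B ν α * cartan B α ν * B α α := by
            rw [hq]; linear_combination cartan B α ν * hpq.symm
        _ < 4 * B α α := by gcongr; exact hΔ.cartan_mul_cartan_lt_four hlocfin hα hν hind
        _ ≤ 4 * B ν ν := by linarith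
    have : q ^ 2 < 4 := by exact_mod_cast hq2
    have : -2 < q ∧ q < 2 := ⟨by nlinarith, by nlinarith⟩
    omega
  · obtain ⟨c, rfl⟩ : ∃ c : ℚ, c • α = ν := by
      have hα0 : α ≠ 0 := by rintro rfl; simp at hαα
      simpa [LinearIndependent.pair_iff' hα0] using hind
    have hc : (q : ℚ) * c = 2 := by
      rw [hq, cartan_smul_right, cartan_self hαα.ne']
      field_simp [show c ≠ 0 by rintro rfl; simp at hαν]
    have hc2 : 1 ≤ c ^ 2 := by
      simp only [map_smul, LinearMap.smul_apply, smul_eq_mul] at hle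
      nlinarith
    have : q ^ 2 ≤ 4 := by exact_mod_cast (by nlinarith : (q : ℚ) ^ 2 ≤ 4)
    have : -2 ≤ q ∧ q ≤ 2 := ⟨by nlinarith, by nlinarith⟩
    rcases (by omega : q = 2 ∨ q = -2 ∨ q = 1 ∨ q = -1) with rfl | rfl | h | h
    · left; rw [show c = 1 by push_cast at hc; linarith, one_smul]
    · right; left; rw [show c = -1 by push_cast at hc; linarith, neg_one_smul]
    all_goals tauto

end IsRootSystem

variable (B) in
/-- A root system extended by `G`, except the generation condition (i). -/
structure IsExtension (Δ : Set V) {G : Type*} [AddCommGroup G] (S : V → Set G) : Prop where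
  sub_zsmul_mem : ∀ μ ∈ Δ, ∀ ν ∈ Δ, ∀ k : ℤ, (k : ℚ) = cartan B ν μ →
    ∀ s ∈ S ν, ∀ s' ∈ S μ, s - k • s' ∈ S (reflect B μ ν)
  zero_mem : ∀ μ ∈ Δ, (1 / 2 : ℚ) • μ ∉ Δ → (0 : G) ∈ S μ

namespace IsExtension

variable {Δ : Set V} {G : Type*} [AddCommGroup G] {S : V → Set G}
  (hS : IsExtension B Δ S) (hΔ : IsRootSystem B Δ)
include hS

lemma subset_reflect_of_cartan_eq_neg_one {α ν : V} (hα : α ∈ Δ) (hν : ν ∈ Δ)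
    (hhalf : (1 / 2 : ℚ) • α ∉ Δ) (hc : cartan B α ν = -1) : S ν ⊆ S (reflect B ν α) := by
  intro s hs
  simpa using hS.sub_zsmul_mem ν hν α hα (-1) (by simp [hc]) 0 (hS.zero_mem α hα hhalf) s hs

include hΔ

lemma subset_reflect {μ ν : V} (hμ : μ ∈ Δ) (hν : ν ∈ Δ) : S ν ⊆ S (reflect B μ ν) := by
  intro s hs
  obtain ⟨k, hk⟩ := hΔ.cartan_int μ hμ ν hν
  by_cases hhalf : (1 / 2 : ℚ) • μ ∈ Δ
  · -- `0 ∈ S_{μ/2}`, and reflecting in `μ/2` is reflecting in `μ`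
    have h0 := hS.zero_mem _ hhalf (hΔ.half_smul_half_smul_not_mem hμ)
    have hk' : ((2 * k : ℤ) : ℚ) = cartan B ν ((1 / 2 : ℚ) • μ) := by
      rw [cartan_smul_right, ← hk]; push_cast; ring
    have hr : reflect B ((1 / 2 : ℚ) • μ) ν = reflect B μ ν := by
      simp only [reflect, cartan_smul_right, smul_smul]
      congr 2; ring
    have := hS.sub_zsmul_mem _ hhalf ν hν _ hk' s hs 0 h0
    rwa [smul_zero, sub_zero, hr] at this
  · simpa using hS.sub_zsmul_mem μ hμ ν hν k hk s hs 0 (hS.zero_mem μ hμ hhalf)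

lemma reflect_eq {μ ν : V} (hμ : μ ∈ Δ) (hν : ν ∈ Δ) : S (reflect B μ ν) = S ν := by
  refine (Set.Subset.antisymm ?_ (hS.subset_reflect hΔ hμ hν))
  simpa [reflect_reflect (hΔ.apply_self_ne_zero hμ)] using
    hS.subset_reflect hΔ hμ (hΔ.reflect_mem μ hμ ν hν)

lemma neg_eq {μ : V} (hμ : μ ∈ Δ) : S (-μ) = S μ := by
  simpa [reflect_self (hΔ.apply_self_ne_zero hμ)] using hS.reflect_eq hΔ hμ hμ

/-- With `γ = s_ν α = α - ν` one has `⟨α, γ⟩ = 1`, so `s_γ α = ν`. -/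
lemma eq_of_cartan_eq_one {α ν : V} (hα : α ∈ Δ) (hν : ν ∈ Δ) (hlen : B α α = B ν ν)
    (hc : cartan B α ν = 1) : S α = S ν := by
  have hγ := hΔ.reflect_mem ν hν α hα
  have hαν : B α ν = B α α / 2 := by
    simp only [cartan, ← hlen] at hc
    field_simp [hΔ.apply_self_ne_zero hα] at hc
    linarith
  have hcγ : cartan B α (reflect B ν α) = 1 := by
    rw [cartan, apply_reflect_reflect hΔ.symm, hΔ.symm, apply_reflect_left, hc, one_mul,
      hΔ.symm ν α, hαν]
    field_simp [hΔ.apply_self_ne_zero hα]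
    ring
  have hsγ : reflect B (reflect B ν α) α = ν := by
    rw [reflect, hcγ, reflect, hc]; module
  rw [← hS.reflect_eq hΔ hγ hα, hsγ]

lemma eq_of_apply_ne_zero
    (hlocfin : IsLocallyFinite Δ)
    {α ν : V} (hα : α ∈ Δ) (hν : ν ∈ Δ) (hlen : B α α = B ν ν) (hαν : B α ν ≠ 0) :
    S α = S ν := by
  rcases hΔ.eq_or_eq_neg_or_cartan_eq_one_or_neg_one hlocfin hα hν hlen.le hαν
    with rfl | rfl | hc | hc
  · rfl
  · exact (hS.neg_eq hΔ hα).symm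
  · exact hS.eq_of_cartan_eq_one hΔ hα hν hlen hc
  · rw [← hS.neg_eq hΔ hν]
    exact hS.eq_of_cartan_eq_one hΔ hα (hΔ.neg_mem hν) (by simpa using hlen)
      (by rw [cartan_neg_right, hc, neg_neg])

/-- The roots of the length of `μ` with the same `S` form a reflection-stable set, so by
irreducibility one of them is non-orthogonal to `ν`. -/
lemma eq_of_apply_self_eq
    (hlocfin : IsLocallyFinite Δ)
    (hirr : IsIrreducible B Δ)
    {μ ν : V} (hμ : μ ∈ Δ) (hν : ν ∈ Δ) (hlen : B μ μ = B ν ν) : S μ = S ν := by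
  obtain ⟨α, ⟨hα, hαμ, hSα⟩, hαν⟩ :=
    hΔ.exists_apply_ne_zero hirr (X := {α ∈ Δ | B α α = B μ μ ∧ S α = S μ})
      (fun _ h ↦ h.1) ⟨μ, hμ, rfl, rfl⟩
      (fun ρ hρ α ⟨hα, hαμ, hSα⟩ ↦ ⟨hΔ.reflect_mem ρ hρ α hα,
        (apply_reflect_reflect hΔ.symm ρ α).trans hαμ, (hS.reflect_eq hΔ hρ hα).trans hSα⟩) hν
  exact hSα.symm.trans (hS.eq_of_apply_ne_zero hΔ hlocfin hα hν (hαμ.trans hlen) hαν)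

lemma subset_of_forall_le
    (hlocfin : IsLocallyFinite Δ)
    (hirr : IsIrreducible B Δ)
    {μ : V} (hμ : μ ∈ Δ) (hshort : ∀ ρ ∈ Δ, B μ μ ≤ B ρ ρ) {ν : V} (hν : ν ∈ Δ) :
    S ν ⊆ S μ := by
  by_cases hlen : B μ μ = B ν ν
  · exact (hS.eq_of_apply_self_eq hΔ hlocfin hirr hμ hν hlen).ge
  obtain ⟨α, ⟨hα, hαμ⟩, hαν⟩ :=
    hΔ.exists_apply_ne_zero hirr (X := {α ∈ Δ | B α α = B μ μ}) (fun _ h ↦ h.1) ⟨μ, hμ, rfl⟩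
      (fun ρ hρ α ⟨hα, hαμ⟩ ↦ ⟨hΔ.reflect_mem ρ hρ α hα,
        (apply_reflect_reflect hΔ.symm ρ α).trans hαμ⟩) hν
  have hhalf : (1 / 2 : ℚ) • α ∉ Δ := fun h ↦ by
    have := hshort _ h
    simp only [map_smul, LinearMap.smul_apply, smul_eq_mul, hαμ] at this
    linarith [hΔ.pos μ hμ]
  have key : ∀ ν' ∈ Δ, cartan B α ν' = -1 → S ν' ⊆ S μ := fun ν' hν' hc ↦
    (hS.subset_reflect_of_cartan_eq_neg_one hα hν' hhalf hc).trans
      (hS.eq_of_apply_self_eq hΔ hlocfin hirr (hΔ.reflect_mem ν' hν' α hα) hμ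
        ((apply_reflect_reflect hΔ.symm ν' α).trans hαμ)).le
  rcases hΔ.eq_or_eq_neg_or_cartan_eq_one_or_neg_one hlocfin hα hν
      (hαμ ▸ hshort ν hν) hαν with rfl | rfl | hc | hc
  · exact absurd hαμ.symm hlen
  · exact absurd (by simpa using hαμ.symm) hlen
  · rw [← hS.neg_eq hΔ hν]
    exact key (-ν) (hΔ.neg_mem hν) (by rw [cartan_neg_right, hc])
  · exact key ν hν hc

end IsExtension

end ExtendedRootSystem

open ExtendedRootSystem in
theorem stmt_12_general (V : Type*) [AddCommGroup V] [Module ℚ V]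
    (B : V →ₗ[ℚ] V →ₗ[ℚ] ℚ) (hBsymm : ∀ u v : V, B u v = B v u)
    (Δ : Set V)
    (hpos : ∀ μ ∈ Δ, 0 < B μ μ)
    (hcart : ∀ μ ∈ Δ, ∀ ν ∈ Δ, ∃ k : ℤ, (k : ℚ) = 2 * B ν μ / B μ μ)
    (hrefl : ∀ μ ∈ Δ, ∀ ν ∈ Δ, ν - (2 * B ν μ / B μ μ) • μ ∈ Δ)
    (hlocfin : ∀ S' : Finset V, (Δ ∩ (Submodule.span ℚ (S' : Set V) : Set V)).Finite)
    (hirr : ∀ Δ₁ Δ₂ : Set V, Δ = Δ₁ ∪ Δ₂ →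
      (∀ a ∈ Δ₁, ∀ b ∈ Δ₂, B a b = 0) → Δ₁ = ∅ ∨ Δ₂ = ∅)
    (G : Type*) [AddCommGroup G] (S : V → Set G)
    (hS1 : ∀ μ ∈ Δ, ∀ ν ∈ Δ, ∀ k : ℤ, (k : ℚ) = 2 * B ν μ / B μ μ →
      ∀ s ∈ S ν, ∀ s' ∈ S μ, s - k • s' ∈ S (ν - (k : ℚ) • μ))
    (hS2 : ∀ μ ∈ Δ, (1 / 2 : ℚ) • μ ∉ Δ → (0 : G) ∈ S μ) :
    (∀ μ ∈ Δ, ∀ ν ∈ Δ, B μ μ = B ν ν → S μ = S ν) ∧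
    (∀ μ ∈ Δ, (∀ ρ ∈ Δ, B μ μ ≤ B ρ ρ) → ∀ ν ∈ Δ, S ν ⊆ S μ) := by
  have hΔ : IsRootSystem B Δ := ⟨hBsymm, hpos, hcart, hrefl⟩
  have hS : IsExtension B Δ S := by
    refine ⟨fun μ hμ ν hν k hk s hs s' hs' ↦ ?_, hS2⟩
    rw [reflect, ← hk]
    exact hS1 μ hμ ν hν k hk s hs s' hs'
  exact ⟨fun μ hμ ν hν ↦ hS.eq_of_apply_self_eq hΔ hlocfin hirr hμ hν,
    fun μ hμ hshort ν hν ↦ hS.subset_of_forall_le hΔ hlocfin hirr hμ hshort hν⟩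

/-- For a root system `{S_μ}_{μ∈Δ}` extended by an abelian group `G`, over a locally finite
irreducible root system `Δ`: roots of the same length have the same set `S_μ`, and if `μ` is
a short root then `S_ν ⊆ S_μ` for all `ν ∈ Δ`. -/
theorem stmt_12 (V : Type*) [AddCommGroup V] [Module ℚ V]
    (B : V →ₗ[ℚ] V →ₗ[ℚ] ℚ) (hBsymm : ∀ u v : V, B u v = B v u)
    (Δ : Set V) (h0 : (0 : V) ∉ Δ) (hΔne : Δ.Nonempty)
    (hpos : ∀ μ ∈ Δ, 0 < B μ μ)
    (hcart : ∀ μ ∈ Δ, ∀ ν ∈ Δ, ∃ k : ℤ, (k : ℚ) = 2 * B ν μ / B μ μ)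
    (hrefl : ∀ μ ∈ Δ, ∀ ν ∈ Δ, ν - (2 * B ν μ / B μ μ) • μ ∈ Δ)
    (hlocfin : ∀ S' : Finset V, (Δ ∩ (Submodule.span ℚ (S' : Set V) : Set V)).Finite)
    (hirr : ∀ Δ₁ Δ₂ : Set V, Δ = Δ₁ ∪ Δ₂ →
      (∀ a ∈ Δ₁, ∀ b ∈ Δ₂, B a b = 0) → Δ₁ = ∅ ∨ Δ₂ = ∅)
    (G : Type*) [AddCommGroup G] (S : V → Set G)
    (hgen : AddSubgroup.closure (⋃ μ ∈ Δ, S μ) = ⊤)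
    (hS1 : ∀ μ ∈ Δ, ∀ ν ∈ Δ, ∀ k : ℤ, (k : ℚ) = 2 * B ν μ / B μ μ →
      ∀ s ∈ S ν, ∀ s' ∈ S μ, s - k • s' ∈ S (ν - (k : ℚ) • μ))
    (hS2 : ∀ μ ∈ Δ, (1 / 2 : ℚ) • μ ∉ Δ → (0 : G) ∈ S μ) :
    (∀ μ ∈ Δ, ∀ ν ∈ Δ, B μ μ = B ν ν → S μ = S ν) ∧
    (∀ μ ∈ Δ, (∀ ρ ∈ Δ, B μ μ ≤ B ρ ρ) → ∀ ν ∈ Δ, S ν ⊆ S μ) :=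
  stmt_12_general V B hBsymm Δ hpos hcart hrefl hlocfin hirr G S hS1 hS2
end

section
/- Let g be a Lie algebra over F, L = g ⊗ F[t^{±1}] its loop algebra, B = c·(tr ⊗ ε) an invariant bilinear form with ε(tᵐ, tⁿ) = δ_{m+n,0}, and d a linear map on a Lie algebra 𝔏 ⊇ L ⊕ Fc acting on L as s_m ∘ (ad p + a·d⁰) for some m ≠ 0, p diagonal, a ∈ F, where d⁰ = t(d/dt). If B is invariant under ad d in the sense that B([d, u], v) = −B(u, [d, v]) for u, v ∈ L, and there exist h, h' ∈ g with B(h ⊗ t, h' ⊗ t⁻¹) ≠ 0 and [p, h] = [p, h'] = 0, then a = 0. -/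
open TensorProduct LaurentPolynomial

/-- If a linear map `D` on the loop algebra `g ⊗ F[t^{±1}]` acts as
`s_m ∘ (ad p + a·d⁰)` with `m ≠ 0`, is skew relative to the graded form
`B = c·(tr ⊗ ε)`, and there are `h, h'` commuting with `p` with `B(h⊗t, h'⊗t⁻¹) ≠ 0`,
then `a = 0`. -/
theorem stmt_19 (F : Type*) [Field F] [CharZero F] (g : Type*) [LieRing g] [LieAlgebra F g]
    (κ : g →ₗ[F] g →ₗ[F] F) (c : F) (hc : c ≠ 0)
    (B : (LaurentPolynomial F ⊗[F] g) →ₗ[F] (LaurentPolynomial F ⊗[F] g) →ₗ[F] F)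
    (hB : ∀ (j k : ℤ) (x y : g),
      B (T j ⊗ₜ[F] x) (T k ⊗ₜ[F] y) = if j + k = 0 then c * κ x y else 0)
    (δ : g →ₗ[F] g) (a : F) (m : ℤ) (hm : m ≠ 0)
    (D : (LaurentPolynomial F ⊗[F] g) →ₗ[F] (LaurentPolynomial F ⊗[F] g))
    (hD : ∀ (k : ℤ) (x : g),
      D (T k ⊗ₜ[F] x) = T (k + m) ⊗ₜ[F] δ x + (a * (k : F)) • (T (k + m) ⊗ₜ[F] x))
    (hskew : ∀ u v : LaurentPolynomial F ⊗[F] g, B (D u) v = - B u (D v))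
    (h h' : g) (hδh : δ h = 0) (hδh' : δ h' = 0)
    (hpair : B (T 1 ⊗ₜ[F] h) (T (-1) ⊗ₜ[F] h') ≠ 0) :
    a = 0 := by
  have hκ : c * κ h h' ≠ 0 := by
    have := hB 1 (-1) h h'
    simp at this
    rwa [this] at hpair
  have key := hskew (T 1 ⊗ₜ[F] h) (T (-m-1) ⊗ₜ[F] h')
  rw [hD 1 h, hD (-m-1) h'] at key
  simp only [hδh, hδh', TensorProduct.tmul_zero, zero_add, map_add, map_smul, map_zero,
    LinearMap.add_apply, LinearMap.smul_apply, LinearMap.zero_apply, smul_eq_mul] at key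
  rw [hB (1+m) (-m-1) h h', hB 1 (-m-1+m) h h'] at key
  have e1 : (1+m) + (-m-1) = 0 := by ring
  have e2 : (1:ℤ) + (-m-1+m) = 0 := by ring
  rw [if_pos e1, if_pos e2] at key
  push_cast at key
  have : a * (m : F) * (c * κ h h') = 0 := by linear_combination -key
  have hmF : (m : F) ≠ 0 := Int.cast_ne_zero.mpr hm
  rcases mul_eq_zero.mp this with h1 | h2
  · rcases mul_eq_zero.mp h1 with h3 | h4
    · exact h3
    · exact absurd h4 hmF
  · exact absurd h2 hκ
end
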